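/- arXiv:1206.4422 — 5 statements merged into one kernel-verified Lean document; each statement's English description precedes it below -/
import Mathlib

section
/- Let S be a unitary operator with S² = I on a Hilbert space H, Γ a closed subspace with projection Π, T = ΠS restricted to Γ, and suppose v ∈ Γ is a normalized eigenvector of T with eigenvalue λ = cos θ where 0 < θ < π. Define Ω± = (1/(√2 sin θ))(v − e^{±iθ} S v). Then, with C = 2Π − I and U = SC, one has U Ω± = e^{±iθ} Ω±. -/
/-!
On the plane spanned by `v` and `S v` both reflections act explicitly: `S` swaps `v` and `S v`,
while `2Π - I` fixes `v` and sends `S v` to `2λ v - S v`. Hence `U (v - e S v) = e (v - e S v)`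
reduces to the scalar identity `e² - 2λ e + 1 = 0`, which holds for `e = exp (± i θ)` and
`λ = cos θ` since `e + e⁻¹ = 2 cos θ`.
-/

open Complex

theorem Complex.exp_mul_I_mul_self_add_one (z : ℂ) :
    exp (z * I) * exp (z * I) + 1 = 2 * cos z * exp (z * I) := by
  have hinv : exp (-z * I) * exp (z * I) = 1 := by
    rw [← exp_add, neg_mul, neg_add_cancel, exp_zero]
  rw [two_cos, add_mul, hinv]

theorem Complex.exp_sign_mul_mul_I_mul_self_add_one {s : ℝ} (hs : s = 1 ∨ s = -1) (θ : ℝ) :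
    exp (s * θ * I) * exp (s * θ * I) + 1 = 2 * (Real.cos θ : ℂ) * exp (s * θ * I) := by
  have hcos : cos (s * θ) = Real.cos θ := by
    rcases hs with rfl | rfl <;> simp
  rw [exp_mul_I_mul_self_add_one, hcos]

section Reflection

variable {𝕜 H F : Type*} [RCLike 𝕜] [NormedAddCommGroup H] [InnerProductSpace 𝕜 H]
  [FunLike F H H] [LinearMapClass F 𝕜 H H] (S : F) (K : Submodule 𝕜 H) [K.HasOrthogonalProjection]

theorem apply_reflection_smul_sub_smul_eq_smul {v : H} (hSv : S (S v) = v) (hv : v ∈ K) {l e : 𝕜}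
    (hPv : (K.orthogonalProjectionOnto (S v) : H) = l • v) (he : e * e + 1 = 2 * l * e) (c : 𝕜) :
    S ((2 : 𝕜) • (K.orthogonalProjectionOnto (c • (v - e • S v)) : H) - c • (v - e • S v))
      = e • c • (v - e • S v) := by
  have hPv' : (K.orthogonalProjectionOnto v : H) = v :=
    congrArg Subtype.val (K.orthogonalProjectionOnto_mem_subspace_eq_self ⟨v, hv⟩)
  simp only [map_sub, map_smul, Submodule.coe_sub, Submodule.coe_smul, hPv', hPv, hSv]
  match_scalars
  · linear_combination c * he
  · ring

end Reflection

theorem stmt1_general {H : Type*} [NormedAddCommGroup H] [InnerProductSpace ℂ H]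
    (S : H ≃ₗᵢ[ℂ] H) (hS : ∀ x, S (S x) = x)
    (K : Submodule ℂ H) [CompleteSpace K]
    (U : H → H)
    (hU : ∀ x, U x = S ((2 : ℂ) • ((K.orthogonalProjectionOnto x : H)) - x))
    (θ : ℝ)
    (v : H) (hv : v ∈ K)
    (heig : ((K.orthogonalProjectionOnto (S v)) : H) = ((Real.cos θ : ℂ)) • v)
    (s : ℝ) (hs : s = 1 ∨ s = -1) :
    U ((((Real.sqrt 2 * Real.sin θ : ℝ) : ℂ)⁻¹) •
        (v - Complex.exp ((s : ℂ) * θ * Complex.I) • S v))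
      = Complex.exp ((s : ℂ) * θ * Complex.I) •
        ((((Real.sqrt 2 * Real.sin θ : ℝ) : ℂ)⁻¹) •
          (v - Complex.exp ((s : ℂ) * θ * Complex.I) • S v)) := by
  rw [hU]
  exact apply_reflection_smul_sub_smul_eq_smul S K (hS v) hv heig
    (exp_sign_mul_mul_I_mul_self_add_one hs θ) _

theorem stmt1 {H : Type*} [NormedAddCommGroup H] [InnerProductSpace ℂ H]
    (S : H ≃ₗᵢ[ℂ] H) (hS : ∀ x, S (S x) = x)
    (K : Submodule ℂ H) [CompleteSpace K]
    (U : H → H)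
    (hU : ∀ x, U x = S ((2 : ℂ) • ((K.orthogonalProjectionOnto x : H)) - x))
    (θ : ℝ) (hθ₁ : 0 < θ) (hθ₂ : θ < Real.pi)
    (v : H) (hv : v ∈ K) (hnorm : ‖v‖ = 1)
    (heig : ((K.orthogonalProjectionOnto (S v)) : H) = ((Real.cos θ : ℂ)) • v)
    (s : ℝ) (hs : s = 1 ∨ s = -1) :
    U ((((Real.sqrt 2 * Real.sin θ : ℝ) : ℂ)⁻¹) •
        (v - Complex.exp ((s : ℂ) * θ * Complex.I) • S v))
      = Complex.exp ((s : ℂ) * θ * Complex.I) •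
        ((((Real.sqrt 2 * Real.sin θ : ℝ) : ℂ)⁻¹) •
          (v - Complex.exp ((s : ℂ) * θ * Complex.I) • S v)) :=
  stmt1_general S hS K U hU θ v hv heig s hs
end

section
/- Let p, q > 0, r = 1 − p − q ≥ 0, N ≥ 2, and let T_N be the (N+1)×(N+1) real symmetric tridiagonal matrix with diagonal entries (0, r, r, …, r, 0), off-diagonal entries √q (between indices 0 and 1), √(pq) (between indices j and j+1 for 1 ≤ j ≤ N−2), and √p (between indices N−1 and N). Then 1 is an eigenvalue of T_N, i.e., det(T_N − I) = 0. -/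
/-- The Jacobi matrix of the one-dimensional reduction of the Grover walk on the
path of length `N`: `(N+1) × (N+1)` symmetric tridiagonal matrix with diagonal
`(0, r, …, r, 0)` and off-diagonal entries `√q` (between indices 0 and 1),
`√(pq)` (between interior indices) and `√p` (between indices N−1 and N). -/
noncomputable def TN (p q r : ℝ) (N : ℕ) : Matrix (Fin (N + 1)) (Fin (N + 1)) ℝ :=
  Matrix.of fun i j =>
    if (i : ℕ) = (j : ℕ) then (if (i : ℕ) = 0 ∨ (i : ℕ) = N then 0 else r)
    else if (i : ℕ) + 1 = (j : ℕ) ∨ (j : ℕ) + 1 = (i : ℕ) then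
      (if (i : ℕ) = 0 ∨ (j : ℕ) = 0 then Real.sqrt q
       else if (i : ℕ) = N ∨ (j : ℕ) = N then Real.sqrt p
       else Real.sqrt (p * q))
    else 0

noncomputable def TTaux (p q r : ℝ) (N : ℕ) (i j : ℕ) : ℝ :=
  if i = j then (if i = 0 ∨ i = N then 0 else r)
  else if i + 1 = j ∨ j + 1 = i then
    (if i = 0 ∨ j = 0 then Real.sqrt q
     else if i = N ∨ j = N then Real.sqrt p
     else Real.sqrt (p * q))
  else 0

noncomputable def uuaux (p q : ℝ) (N : ℕ) (j : ℕ) : ℝ :=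
  if j = 0 then Real.sqrt p * Real.sqrt q ^ (N - 1)
  else if j = N then Real.sqrt p ^ N
  else Real.sqrt p ^ j * Real.sqrt q ^ (N - 1 - j)

lemma key_row (p q r : ℝ) (hp : 0 < p) (hq : 0 < q) (hr : r = 1 - p - q)
    (N : ℕ) (hN : 2 ≤ N) (i : ℕ) (hi : i ≤ N) :
    ∑ n ∈ Finset.range (N + 1), TTaux p q r N i n * uuaux p q N n = uuaux p q N i := by
  subst hr
  have ha2 : Real.sqrt p ^ 2 = p := Real.sq_sqrt hp.le
  have hb2 : Real.sqrt q ^ 2 = q := Real.sq_sqrt hq.le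
  have hab : Real.sqrt (p * q) = Real.sqrt p * Real.sqrt q := Real.sqrt_mul hp.le q
  rcases Nat.eq_zero_or_pos i with hi0 | hi1
  · -- row 0
    subst hi0
    have hpt : ∀ n ∈ Finset.range (N + 1),
        TTaux p q (1 - p - q) N 0 n * uuaux p q N n =
        if n = 1 then Real.sqrt q * uuaux p q N n else 0 := by
      intro n _
      unfold TTaux
      split_ifs <;> first | ring1 | (exfalso; omega) | (exfalso; casesm* _ ∨ _, False <;> omega)
    rw [Finset.sum_congr rfl hpt, Finset.sum_ite_eq' (Finset.range (N + 1)) 1,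
      if_pos (by simp only [Finset.mem_range]; omega)]
    unfold uuaux
    rw [if_neg (by omega), if_neg (by omega), if_pos rfl]
    obtain ⟨m, rfl⟩ : ∃ m, N = m + 2 := ⟨N - 2, by omega⟩
    rw [show m + 2 - 1 - 1 = m from by omega, show m + 2 - 1 = m + 1 from by omega]
    ring
  rcases Nat.eq_or_lt_of_le hi with hiN | hiN
  · -- row N
    have hpt : ∀ n ∈ Finset.range (N + 1),
        TTaux p q (1 - p - q) N i n * uuaux p q N n =
        if n = N - 1 then Real.sqrt p * uuaux p q N n else 0 := by
      intro n hn
      rw [Finset.mem_range] at hn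
      unfold TTaux
      split_ifs <;> first | ring1 | (exfalso; omega) | (exfalso; casesm* _ ∨ _, False <;> omega)
    rw [Finset.sum_congr rfl hpt, Finset.sum_ite_eq' (Finset.range (N + 1)) (N - 1),
      if_pos (by simp only [Finset.mem_range]; omega)]
    unfold uuaux
    rw [if_neg (by omega), if_neg (by omega), if_neg (by omega), if_pos hiN,
      show N - 1 - (N - 1) = 0 from by omega]
    obtain ⟨m, rfl⟩ : ∃ m, N = m + 1 := ⟨N - 1, by omega⟩
    rw [show m + 1 - 1 = m from by omega]
    ring
  -- middle rows 1 ≤ i ≤ N - 1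
  have hpt : ∀ n ∈ Finset.range (N + 1),
      TTaux p q (1 - p - q) N i n * uuaux p q N n =
      (if n = i - 1 then (if i = 1 then Real.sqrt q else Real.sqrt p * Real.sqrt q)
          * uuaux p q N n else 0) +
      ((if n = i then (1 - p - q) * uuaux p q N n else 0) +
       (if n = i + 1 then (if i + 1 = N then Real.sqrt p else Real.sqrt p * Real.sqrt q)
          * uuaux p q N n else 0)) := by
    intro n hn
    rw [Finset.mem_range] at hn
    unfold TTaux
    rw [hab]
    split_ifs <;> first | ring1 | (exfalso; omega) | (exfalso; casesm* _ ∨ _, False <;> omega)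
  rw [Finset.sum_congr rfl hpt, Finset.sum_add_distrib, Finset.sum_add_distrib,
    Finset.sum_ite_eq' (Finset.range (N + 1)) (i - 1),
    Finset.sum_ite_eq' (Finset.range (N + 1)) i,
    Finset.sum_ite_eq' (Finset.range (N + 1)) (i + 1),
    if_pos (show i - 1 ∈ Finset.range (N + 1) from by simp only [Finset.mem_range]; omega),
    if_pos (show i ∈ Finset.range (N + 1) from by simp only [Finset.mem_range]; omega),
    if_pos (show i + 1 ∈ Finset.range (N + 1) from by simp only [Finset.mem_range]; omega)]
  rcases Nat.eq_or_lt_of_le hi1 with h1 | h1'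
  · rcases Nat.eq_or_lt_of_le (show i + 1 ≤ N by omega) with h2 | h2
    · -- i = 1, N = 2
      obtain rfl : i = 1 := h1.symm
      obtain rfl : N = 2 := by omega
      rw [if_pos rfl, if_pos rfl]
      unfold uuaux
      norm_num
      linear_combination Real.sqrt p * hb2 + Real.sqrt p * ha2
    · -- i = 1, N ≥ 3
      obtain rfl : i = 1 := h1.symm
      rw [if_pos rfl, if_neg (by omega)]
      unfold uuaux
      rw [if_pos rfl, if_neg (by omega), if_neg (by omega),
        if_neg (by omega), if_neg (by omega)]
      obtain ⟨m, rfl⟩ : ∃ m, N = m + 3 := ⟨N - 3, by omega⟩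
      rw [show m + 3 - 1 = m + 2 from by omega, show m + 2 - 1 = m + 1 from by omega,
        show m + 2 - (1 + 1) = m from by omega]
      linear_combination (Real.sqrt p * Real.sqrt q ^ (m + 1)) * hb2
        + (Real.sqrt p * Real.sqrt q ^ (m + 1)) * ha2
  rcases Nat.eq_or_lt_of_le (show i + 1 ≤ N by omega) with h2 | h2
  · -- 2 ≤ i = N - 1
    rw [if_neg (by omega), if_pos h2]
    unfold uuaux
    rw [if_neg (by omega), if_neg (by omega), if_neg (by omega), if_neg (by omega),
      if_neg (by omega), if_pos h2]
    obtain ⟨k, rfl⟩ : ∃ k, i = k + 2 := ⟨i - 2, by omega⟩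
    obtain rfl : N = k + 3 := by omega
    rw [show k + 2 - 1 = k + 1 from by omega,
      show k + 3 - 1 - (k + 1) = 1 from by omega,
      show k + 3 - 1 - (k + 2) = 0 from by omega]
    linear_combination (Real.sqrt p ^ (k + 2)) * hb2 + (Real.sqrt p ^ (k + 2)) * ha2
  · -- interior 2 ≤ i ≤ N - 2
    rw [if_neg (by omega), if_neg (by omega)]
    unfold uuaux
    rw [if_neg (by omega), if_neg (by omega), if_neg (by omega), if_neg (by omega),
      if_neg (by omega), if_neg (by omega)]
    obtain ⟨k, rfl⟩ : ∃ k, i = k + 2 := ⟨i - 2, by omega⟩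
    obtain ⟨m, rfl⟩ : ∃ m, N = k + m + 4 := ⟨N - k - 4, by omega⟩
    rw [show k + 2 - 1 = k + 1 from by omega,
      show k + m + 4 - 1 - (k + 1) = m + 2 from by omega,
      show k + m + 4 - 1 - (k + 2) = m + 1 from by omega,
      show k + m + 4 - 1 - (k + 2 + 1) = m from by omega]
    linear_combination (Real.sqrt p ^ (k + 2) * Real.sqrt q ^ (m + 1)) * hb2
      + (Real.sqrt p ^ (k + 2) * Real.sqrt q ^ (m + 1)) * ha2

theorem stmt5 (p q r : ℝ) (hp : 0 < p) (hq : 0 < q) (hr : r = 1 - p - q)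
    (hr0 : 0 ≤ r) (N : ℕ) (hN : 2 ≤ N) :
    (TN p q r N - 1).det = 0 := by
  rw [← Matrix.exists_mulVec_eq_zero_iff]
  refine ⟨fun i => uuaux p q N (i : ℕ), ?_, ?_⟩
  · intro h
    have h0 : uuaux p q N ((0 : Fin (N + 1)) : ℕ) = 0 := congrFun h 0
    have hz : ((0 : Fin (N + 1)) : ℕ) = 0 := rfl
    rw [hz] at h0
    unfold uuaux at h0
    rw [if_pos rfl] at h0
    have hap : 0 < Real.sqrt p := Real.sqrt_pos.mpr hp
    have hbp : 0 < Real.sqrt q := Real.sqrt_pos.mpr hq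
    nlinarith [pow_pos hbp (N - 1)]
  · funext i
    rw [Matrix.sub_mulVec, Matrix.one_mulVec]
    have hrow : (TN p q r N).mulVec (fun j => uuaux p q N (j : ℕ)) i
        = uuaux p q N (i : ℕ) := by
      have hs : (TN p q r N).mulVec (fun j => uuaux p q N (j : ℕ)) i
          = ∑ n ∈ Finset.range (N + 1), TTaux p q r N (i : ℕ) n * uuaux p q N n := by
        rw [Matrix.mulVec, dotProduct,
          ← Fin.sum_univ_eq_sum_range (fun n => TTaux p q r N (i : ℕ) n * uuaux p q N n)]
        rfl
      rw [hs, key_row p q r hp hq hr N hN (i : ℕ) (by omega : (i : ℕ) ≤ N)]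
    simp [hrow]
end

section
/- Let T_N be the tridiagonal matrix above with r = 0 (so p + q = 1). Then −1 is an eigenvalue of T_N, and its eigenspace is one-dimensional. -/
open Matrix Finset

section Jacobi

variable {R : Type*} [CommRing R] {a b : ℕ → R} {N : ℕ} {μ : R}

def jacobi (a b : ℕ → R) (N : ℕ) : Matrix (Fin (N + 1)) (Fin (N + 1)) R :=
  Matrix.of fun i j =>
    if (i : ℕ) = j then a i
    else if (i : ℕ) + 1 = j then b i
    else if (j : ℕ) + 1 = i then b j
    else 0

theorem jacobi_mulVec_apply (v : ℕ → R) (i : Fin (N + 1)) :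
    (jacobi a b N *ᵥ fun j : Fin (N + 1) => v j) i =
      a i * v i + (if (i : ℕ) < N then b i * v (i + 1) else 0)
        + (if 0 < (i : ℕ) then b (i - 1) * v (i - 1) else 0) := by
  obtain ⟨n, hn⟩ := i
  simp only [mulVec, dotProduct, jacobi, of_apply]
  rw [Fin.sum_univ_eq_sum_range (fun j => (if n = j then a n else if n + 1 = j then b n
    else if j + 1 = n then b j else 0) * v j)]
  have hsplit : ∀ j ∈ range (N + 1), (if n = j then a n else if n + 1 = j then b n
      else if j + 1 = n then b j else 0) * v j =
      (if j = n then a n * v n else 0) + (if j = n + 1 then b n * v (n + 1) else 0)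
        + (if j = n - 1 then (if 0 < n then b (n - 1) * v (n - 1) else 0) else 0) := by
    intro j _
    split_ifs <;> first | omega | (subst_vars; simp)
  rw [sum_congr rfl hsplit, sum_add_distrib, sum_add_distrib]
  simp only [sum_ite_eq', mem_range, hn, show n - 1 < N + 1 by omega, if_true,
    Nat.add_lt_add_iff_right]

theorem jacobi_mulVec_eq_smul_iff (v : ℕ → R) :
    (jacobi a b N *ᵥ fun j : Fin (N + 1) => v j) = μ • (fun j : Fin (N + 1) => v j) ↔
      ∀ k ≤ N, a k * v k + (if k < N then b k * v (k + 1) else 0)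
        + (if 0 < k then b (k - 1) * v (k - 1) else 0) = μ * v k := by
  simp only [funext_iff, Fin.forall_iff, jacobi_mulVec_apply, Pi.smul_apply, smul_eq_mul,
    Nat.lt_succ_iff]

theorem jacobi_eigenvector_eq_zero [IsDomain R] (hb : ∀ k < N, b k ≠ 0)
    {w : Fin (N + 1) → R} (hw : jacobi a b N *ᵥ w = μ • w) (h0 : w 0 = 0) : w = 0 := by
  set w' : ℕ → R := fun k => if hk : k < N + 1 then w ⟨k, hk⟩ else 0
  have hww' : w = fun j : Fin (N + 1) => w' j := by
    funext j; simp only [w', dif_pos j.isLt]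
  rw [hww', jacobi_mulVec_eq_smul_iff] at hw
  have hw'0 : w' 0 = 0 := h0
  suffices ∀ k ≤ N, w' k = 0 by
    rw [hww']; funext j; exact this j (Nat.lt_succ_iff.1 j.isLt)
  intro k
  induction k using Nat.twoStepInduction with
  | zero => exact fun _ => hw'0
  | one =>
    intro h1
    have hrow := hw 0 (Nat.zero_le N)
    simp only [if_pos (show 0 < N from h1), lt_irrefl, if_false, hw'0, mul_zero, zero_add,
      add_zero] at hrow
    exact (mul_eq_zero.1 hrow).resolve_left (hb 0 h1)
  | more n ih ih' =>
    intro hn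
    have hrow := hw (n + 1) (by omega)
    simp only [if_pos (by omega : n + 1 < N), if_pos n.succ_pos, Nat.add_sub_cancel,
      ih (by omega), ih' (by omega), mul_zero, zero_add, add_zero] at hrow
    exact (mul_eq_zero.1 hrow).resolve_left (hb (n + 1) (by omega))

end Jacobi

theorem jacobi_eigenvector_eq_smul {N : ℕ} {K : Type*} [Field K] {a b : ℕ → K} {μ : K}
    (hb : ∀ k < N, b k ≠ 0) {v w : Fin (N + 1) → K} (hv : jacobi a b N *ᵥ v = μ • v)
    (hv0 : v 0 ≠ 0) (hw : jacobi a b N *ᵥ w = μ • w) : w = (w 0 / v 0) • v := by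
  refine sub_eq_zero.1 (jacobi_eigenvector_eq_zero (a := a) (μ := μ) hb ?_ ?_)
  · rw [mulVec_sub, mulVec_smul, hw, hv, smul_sub, smul_comm]
  · simp [hv0]

section Grover

variable {R : Type*} [CommRing R] (s t : R) (N : ℕ)

/-- With `s = √p`, `t = √q`, this is the entry `(k, k + 1)` of `TN`: `t`, then `s * t`,
then `s`. -/
def groverEdge (k : ℕ) : R :=
  (if k = 0 then 1 else s) * (if k + 1 = N then 1 else t)

def groverNegEigvec (k : ℕ) : R :=
  (-1) ^ k * (if k = 0 then 1 else s ^ (k - 1)) * (if k = N then 1 else t ^ (N - 1 - k))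

variable {s t N}

theorem groverEdge_mul_groverNegEigvec_succ {k : ℕ} (hk : k < N) :
    groverEdge s t N k * groverNegEigvec s t N (k + 1) =
      -(if k = 0 then 1 else s ^ 2) * groverNegEigvec s t N k := by
  obtain ⟨m, rfl⟩ : ∃ m, N = k + 1 + m := ⟨N - (k + 1), by omega⟩
  have hexp : k + 1 + m - 1 - k = m := by omega
  have hexp' : k + 1 + m - 1 - (k + 1) = m - 1 := by omega
  have hlast : k + 1 = k + 1 + m ↔ m = 0 := by omega
  have hnot : k ≠ k + 1 + m := by omega
  simp only [groverEdge, groverNegEigvec, hexp, hexp', hlast, hnot, if_false]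
  rcases k with _ | k <;> rcases m with _ | m <;>
    simp only [↓reduceIte, Nat.add_eq_zero_iff, one_ne_zero, and_false, add_tsub_cancel_right,
      tsub_self, zero_add, pow_zero, pow_one] <;> ring

theorem groverEdge_mul_groverNegEigvec {k : ℕ} (hk : k < N) :
    groverEdge s t N k * groverNegEigvec s t N k =
      -(if k + 1 = N then 1 else t ^ 2) * groverNegEigvec s t N (k + 1) := by
  obtain ⟨m, rfl⟩ : ∃ m, N = k + 1 + m := ⟨N - (k + 1), by omega⟩
  have hexp : k + 1 + m - 1 - k = m := by omega
  have hexp' : k + 1 + m - 1 - (k + 1) = m - 1 := by omega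
  have hlast : k + 1 = k + 1 + m ↔ m = 0 := by omega
  have hnot : k ≠ k + 1 + m := by omega
  simp only [groverEdge, groverNegEigvec, hexp, hexp', hlast, hnot, if_false]
  rcases k with _ | k <;> rcases m with _ | m <;>
    simp only [↓reduceIte, Nat.add_eq_zero_iff, one_ne_zero, and_false, add_tsub_cancel_right,
      tsub_self, zero_add, pow_zero, pow_one] <;> ring

theorem groverNegEigvec_mulVec (hst : s ^ 2 + t ^ 2 = 1) (hN : 0 < N) :
    (jacobi 0 (groverEdge s t N) N *ᵥ fun j : Fin (N + 1) => groverNegEigvec s t N j) =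
      (-1 : R) • fun j : Fin (N + 1) => groverNegEigvec s t N j := by
  rw [jacobi_mulVec_eq_smul_iff]
  intro k hk
  simp only [Pi.zero_apply, zero_mul, zero_add]
  rcases k with _ | k
  · rw [if_pos hN, if_neg (lt_irrefl 0), groverEdge_mul_groverNegEigvec_succ hN]
    simp
  · rw [if_pos k.succ_pos, Nat.add_sub_cancel, groverEdge_mul_groverNegEigvec (by omega)]
    rcases (Nat.lt_or_ge (k + 1) N) with hkN | hkN
    · rw [if_pos hkN, groverEdge_mul_groverNegEigvec_succ hkN, if_neg k.succ_ne_zero,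
        if_neg hkN.ne]
      linear_combination (-groverNegEigvec s t N (k + 1)) * hst
    · rw [if_neg (Nat.not_lt.2 hkN), if_pos (by omega)]
      ring

theorem groverEdge_ne_zero [IsDomain R] (hs : s ≠ 0) (ht : t ≠ 0) (k : ℕ) :
    groverEdge s t N k ≠ 0 := by
  unfold groverEdge
  split_ifs <;> simp [hs, ht]

theorem groverNegEigvec_zero_ne_zero [IsDomain R] (ht : t ≠ 0) :
    groverNegEigvec s t N 0 ≠ 0 := by
  simp only [groverNegEigvec, pow_zero, one_mul, ↓reduceIte]
  split_ifs
  exacts [one_ne_zero' R, pow_ne_zero _ ht]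

end Grover

theorem TN_zero_eq_jacobi {p q : ℝ} (hp : 0 ≤ p) {N : ℕ} (hN : 2 ≤ N) :
    TN p q 0 N = jacobi 0 (groverEdge (Real.sqrt p) (Real.sqrt q) N) N := by
  ext i j
  simp only [TN, jacobi, of_apply, groverEdge, Pi.zero_apply, Real.sqrt_mul hp]
  split_ifs <;> first | rfl | omega | simp

theorem stmt8 (p q : ℝ) (hp : 0 < p) (hq : 0 < q) (hpq : p + q = 1)
    (N : ℕ) (hN : 2 ≤ N) :
    ∃ v : Fin (N + 1) → ℝ, v ≠ 0 ∧ (TN p q 0 N).mulVec v = (-1 : ℝ) • v ∧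
      ∀ w : Fin (N + 1) → ℝ, (TN p q 0 N).mulVec w = (-1 : ℝ) • w →
        ∃ c : ℝ, w = c • v := by
  have hs : Real.sqrt p ≠ 0 := (Real.sqrt_pos.2 hp).ne'
  have ht : Real.sqrt q ≠ 0 := (Real.sqrt_pos.2 hq).ne'
  have hst : Real.sqrt p ^ 2 + Real.sqrt q ^ 2 = 1 := by
    rw [Real.sq_sqrt hp.le, Real.sq_sqrt hq.le, hpq]
  have hv := groverNegEigvec_mulVec hst (by omega : 0 < N)
  have hv0 := groverNegEigvec_zero_ne_zero (s := Real.sqrt p) (N := N) ht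
  rw [TN_zero_eq_jacobi hp.le hN]
  refine ⟨_, fun h => hv0 (congrFun h 0), hv, fun w hw =>
    ⟨_, jacobi_eigenvector_eq_smul (fun k _ => groverEdge_ne_zero hs ht k) hv hv0 hw⟩⟩
end

section
/- Let p > 0, q > 0, a ∈ ℝ. Define P₀(x) = 1, and for n ≥ 1, P_n(x) = V_n(x−a) + a q^{(n−1)/2} Ṽ_{n−1}((x−a)/√q), where V_n are the Kesten orthogonal polynomials with parameters p, q and Ṽ_n(x) = U_n(x/2). Then P₁(x) = x, x P₁(x) = P₂(x) + a P₁(x) + p P₀(x), and x P_n(x) = P_{n+1}(x) + a P_n(x) + q P_{n−1}(x) for n ≥ 2. -/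
/-- `Ṽ_n(x) = U_n(x/2)` where `U_n` is the Chebyshev polynomial of the second kind. -/
noncomputable def Vt (n : ℕ) (x : ℝ) : ℝ :=
  (Polynomial.Chebyshev.U ℝ (n : ℤ)).eval (x / 2)

/-- The orthogonal polynomials of the Kesten distribution with parameters `p, q`. -/
noncomputable def Vk (p q : ℝ) : ℕ → ℝ → ℝ
  | 0, _ => 1
  | 1, x => x
  | (n + 2), x =>
      Real.sqrt q ^ (n + 2) *
        (Vt (n + 2) (x / Real.sqrt q) + (1 - p / q) * Vt n (x / Real.sqrt q))

/-- The orthogonal polynomials of the free Meixner law with parameters `p, q, a`. -/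
noncomputable def Pm (p q a : ℝ) : ℕ → ℝ → ℝ
  | 0, _ => 1
  | (n + 1), x =>
      Vk p q (n + 1) (x - a) +
        a * Real.sqrt q ^ n * Vt n ((x - a) / Real.sqrt q)

lemma vt_zero (x : ℝ) : Vt 0 x = 1 := by simp [Vt]

lemma vt_one (x : ℝ) : Vt 1 x = x := by
  simp [Vt, Polynomial.Chebyshev.U_one]; ring

lemma vt_rec (n : ℕ) (x : ℝ) : Vt (n + 2) x = x * Vt (n + 1) x - Vt n x := by
  have h : (Polynomial.Chebyshev.U ℝ ((n:ℤ)+2)).eval (x/2)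
      = 2*(x/2)*(Polynomial.Chebyshev.U ℝ ((n:ℤ)+1)).eval (x/2)
        - (Polynomial.Chebyshev.U ℝ (n:ℤ)).eval (x/2) := by
    rw [Polynomial.Chebyshev.U_add_two]; simp
  simp only [Vt]; push_cast; rw [h]; ring

lemma vk_rec (p q : ℝ) (hq : 0 < q) (n : ℕ) (y : ℝ) :
    y * Vk p q (n + 2) y = Vk p q (n + 3) y + q * Vk p q (n + 1) y := by
  match n with
  | 0 =>
    simp only [Vk]
    rw [vt_rec 0, vt_rec 1, vt_rec 0, vt_zero, vt_one]
    set s := Real.sqrt q with hs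
    have hs0 : s ≠ 0 := ne_of_gt (Real.sqrt_pos.mpr hq)
    have hss : s * s = q := Real.mul_self_sqrt hq.le
    rw [← hss]
    field_simp
    ring
  | (k + 1) =>
    simp only [Vk]
    rw [vt_rec (k + 2), vt_rec k]
    set s := Real.sqrt q with hs
    have hs0 : s ≠ 0 := ne_of_gt (Real.sqrt_pos.mpr hq)
    have hss : s * s = q := Real.mul_self_sqrt hq.le
    rw [← hss]
    field_simp
    ring

theorem stmt13 (p q a : ℝ) (hp : 0 < p) (hq : 0 < q) :
    (∀ x : ℝ, Pm p q a 1 x = x) ∧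
    (∀ x : ℝ, x * Pm p q a 1 x = Pm p q a 2 x + a * Pm p q a 1 x + p * Pm p q a 0 x) ∧
    (∀ n : ℕ, 2 ≤ n → ∀ x : ℝ,
      x * Pm p q a n x = Pm p q a (n + 1) x + a * Pm p q a n x + q * Pm p q a (n - 1) x) := by
  refine ⟨?_, ?_, ?_⟩
  · intro x
    simp [Pm, Vk, vt_zero]
  · intro x
    simp only [Pm, Vk]
    rw [vt_rec 0]
    norm_num [vt_zero, vt_one]
    set s := Real.sqrt q with hs
    have hs0 : s ≠ 0 := ne_of_gt (Real.sqrt_pos.mpr hq)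
    have hss : s * s = q := Real.mul_self_sqrt hq.le
    rw [← hss]
    field_simp
    ring
  · rintro n hn x
    obtain ⟨m, rfl⟩ : ∃ m, n = m + 2 := ⟨n - 2, by omega⟩
    have e : m + 2 - 1 = m + 1 := rfl
    rw [e]
    have hvk := vk_rec p q hq m (x - a)
    simp only [Pm, show m + 2 = (m + 1) + 1 from rfl, show (m + 1) + 1 + 1 = (m + 2) + 1 from rfl]
    rw [show (m + 1) + 1 = m + 2 from rfl, show (m + 2) + 1 = m + 3 from rfl]
    rw [vt_rec m]
    set s := Real.sqrt q with hs
    have hs0 : s ≠ 0 := ne_of_gt (Real.sqrt_pos.mpr hq)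
    have hss : s * s = q := Real.mul_self_sqrt hq.le
    have hy : s * ((x - a) / s) = x - a := by field_simp
    linear_combination hvk - (a * s ^ (m + 1) * Vt (m + 1) ((x - a) / s)) * hy +
      (a * s ^ m * Vt m ((x - a) / s)) * hss
end

section
/- Let p, q, r be reals with p > 0, q > 0, r = 1 − p − q ≥ 0, and (1−p)² − pq > 0. Let {P_n} be the orthogonal polynomials defined by the recurrence P₀ = 1, P₁(x) = x, x P₁(x) = P₂(x) + r P₁(x) + q P₀(x), and x P_n(x) = P_{n+1}(x) + r P_n(x) + pq P_{n−1}(x) for n ≥ 2 (free Meixner with parameters q, pq, r). Define the normalized polynomials p₀ = 1 and p_n(x) = P_n(x)/√(q (pq)^{n−1}) for n ≥ 1. Then at ξ = −q/(1−p), one has p_n(ξ) = (1/√p) · (−√(pq)/(1−p))^n for all n ≥ 1. -/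
/-!
At the atom `ξ = -q/(1-p)` the ratio `ρ = pξ` is a root of the characteristic equation
`ρ² = (ξ - r)ρ - pq` of the recurrence for `n ≥ 2`, and the first step already has
`P₂(ξ) = ρ P₁(ξ)`; hence `Pₙ(ξ) = ξ (pξ)ⁿ⁻¹` is geometric, and dividing by the norm
`√(q (pq)ⁿ⁻¹)` gives the stated power.
-/

theorem eq_mul_pow_of_two_step_recurrence {R : Type*} [CommRing R] {v : ℕ → R} {s b ρ : R}
    (hρ : ρ ^ 2 = s * ρ - b) (hv1 : v 1 = v 0 * ρ)
    (hrec : ∀ n, v (n + 2) = s * v (n + 1) - b * v n) (n : ℕ) :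
    v n = v 0 * ρ ^ n := by
  induction n using Nat.twoStepInduction with
  | zero => ring
  | one => rw [hv1, pow_one]
  | more n ih ih' =>
    rw [hrec, ih, ih']
    linear_combination -(v 0 * ρ ^ n) * hρ

section FreeMeixner

variable {p q r : ℝ}

theorem freeMeixner_atom_quadratic {ξ : ℝ} (hr : r = 1 - p - q) (hξ : (1 - p) * ξ = -q) :
    ξ ^ 2 = r * ξ + q + p * ξ ^ 2 := by
  linear_combination (ξ - 1) * hξ - ξ * hr

theorem freeMeixner_eval_atom {ξ : ℝ} (hr : r = 1 - p - q) (hξ : (1 - p) * ξ = -q)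
    (P : ℕ → ℝ → ℝ) (hP0 : ∀ x, P 0 x = 1) (hP1 : ∀ x, P 1 x = x)
    (hrec1 : ∀ x, x * P 1 x = P 2 x + r * P 1 x + q * P 0 x)
    (hrec : ∀ n : ℕ, 2 ≤ n → ∀ x,
      x * P n x = P (n + 1) x + r * P n x + p * q * P (n - 1) x) (n : ℕ) :
    P (n + 1) ξ = ξ * (p * ξ) ^ n := by
  have hquad := freeMeixner_atom_quadratic hr hξ
  refine (eq_mul_pow_of_two_step_recurrence (v := fun n => P (n + 1) ξ) (s := ξ - r)
    (b := p * q) ?_ ?_ (fun n => ?_) n).trans (by rw [hP1])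
  · linear_combination -p * hquad
  · have hstep1 := hrec1 ξ
    rw [hP0, hP1] at hstep1
    simp only [zero_add, hP1]
    linear_combination -hstep1 + hquad
  · have hstep := hrec (n + 1 + 1) (by omega) ξ
    simp only [Nat.add_sub_cancel] at hstep
    linear_combination -hstep

theorem mul_pow_div_sqrt_eq (hp : 0 < p) (hq : 0 < q) (ξ : ℝ) (m : ℕ) :
    ξ * (p * ξ) ^ m / √(q * (p * q) ^ m) = 1 / √p * (√(p * q) * ξ / q) ^ (m + 1) := by
  obtain ⟨a, ha, rfl⟩ : ∃ a, 0 < a ∧ p = a ^ 2 := ⟨√p, by positivity, (Real.sq_sqrt hp.le).symm⟩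
  obtain ⟨b, hb, rfl⟩ : ∃ b, 0 < b ∧ q = b ^ 2 := ⟨√q, by positivity, (Real.sq_sqrt hq.le).symm⟩
  have hnorm : √(b ^ 2 * (a ^ 2 * b ^ 2) ^ m) = b * (a * b) ^ m := by
    rw [← Real.sqrt_sq (by positivity : 0 ≤ b * (a * b) ^ m)]
    ring_nf
  rw [hnorm, ← mul_pow, Real.sqrt_sq (mul_pos ha hb).le, Real.sqrt_sq ha.le]
  have hb0 := hb.ne'
  have ha0 := ha.ne'
  field_simp
  rw [div_pow]
  field_simp
  ring

end FreeMeixner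

theorem stmt16_general (p q r : ℝ) (hp : 0 < p) (hq : 0 < q) (hr : r = 1 - p - q)
    (hr0 : 0 ≤ r)
    (P : ℕ → ℝ → ℝ)
    (hP0 : ∀ x, P 0 x = 1) (hP1 : ∀ x, P 1 x = x)
    (hrec1 : ∀ x, x * P 1 x = P 2 x + r * P 1 x + q * P 0 x)
    (hrec : ∀ n : ℕ, 2 ≤ n → ∀ x,
      x * P n x = P (n + 1) x + r * P n x + p * q * P (n - 1) x)
    (n : ℕ) (hn : 1 ≤ n) :
    P n (-q / (1 - p)) / Real.sqrt (q * (p * q) ^ (n - 1)) =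
      (1 / Real.sqrt p) * (-(Real.sqrt (p * q)) / (1 - p)) ^ n := by
  have hp1 : 1 - p ≠ 0 := by linarith
  obtain ⟨m, rfl⟩ : ∃ m, n = m + 1 := ⟨n - 1, by omega⟩
  rw [freeMeixner_eval_atom hr (by field_simp) P hP0 hP1 hrec1 hrec, Nat.add_sub_cancel,
    mul_pow_div_sqrt_eq hp hq]
  congr 2
  field_simp

theorem stmt16 (p q r : ℝ) (hp : 0 < p) (hq : 0 < q) (hr : r = 1 - p - q)
    (hr0 : 0 ≤ r) (hatom : 0 < (1 - p) ^ 2 - p * q)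
    (P : ℕ → ℝ → ℝ)
    (hP0 : ∀ x, P 0 x = 1) (hP1 : ∀ x, P 1 x = x)
    (hrec1 : ∀ x, x * P 1 x = P 2 x + r * P 1 x + q * P 0 x)
    (hrec : ∀ n : ℕ, 2 ≤ n → ∀ x,
      x * P n x = P (n + 1) x + r * P n x + p * q * P (n - 1) x)
    (n : ℕ) (hn : 1 ≤ n) :
    P n (-q / (1 - p)) / Real.sqrt (q * (p * q) ^ (n - 1)) =
      (1 / Real.sqrt p) * (-(Real.sqrt (p * q)) / (1 - p)) ^ n :=
  stmt16_general p q r hp hq hr hr0 P hP0 hP1 hrec1 hrec n hn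
end
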